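/- arXiv:2310.17047 — 2 statements merged into one kernel-verified Lean document; each statement's English description precedes it below -/
import Mathlib

section
/- Let q be a prime power and ω a character of F_q^*. The number of characters ν of F_{q^2}^* with ν ≠ ν^q (ν primitive) and ν restricted to F_q^* equal to ω is: q − 1 if q is odd and ω^{(q−1)/2} is trivial; q + 1 if q is odd and ω^{(q−1)/2} is nontrivial; and q if q is even. -/
open Classical

/-! Restricting characters along `ι : Fˣ → Lˣ` is surjective with kernel of order
`[Lˣ : Fˣ] = q + 1`, so every `ω` has exactly `q + 1` extensions `ν`. The non-primitive ones are
those with `ν ^ (q - 1) = 1`; in the cyclic character group of `Lˣ` (of order `(q + 1)(q - 1)`)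
these are exactly the `(q + 1)`-th powers, and since the kernel of restriction consists of the
characters killed by `q + 1`, the map `ν ↦ ν ^ (q + 1)` descends to an isomorphism from the
characters of `Fˣ` onto them. Under it, `ν ∘ ι = ω` becomes `χ ^ (q + 1) = ω`, an equation in a
cyclic group of order `q - 1` with `gcd (q - 1) (q + 1) ∈ {1, 2}` solutions or none. -/

open Function

theorem Nat.card_subtype_and_add_card_subtype_not_and {α : Type*} [Finite α] (p r : α → Prop) :
    Nat.card {a // p a ∧ r a} + Nat.card {a // ¬p a ∧ r a} = Nat.card {a // r a} := by
  rw [← Nat.card_sum, ← Nat.card_congr (Equiv.sumCompl fun x : {a // r a} => p x)]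
  exact Nat.card_congr (Equiv.sumCongr
    ((Equiv.subtypeSubtypeEquivSubtypeInter r p).trans (Equiv.subtypeEquivRight fun _ => and_comm))
    ((Equiv.subtypeSubtypeEquivSubtypeInter r _).trans
      (Equiv.subtypeEquivRight fun _ => and_comm))).symm

theorem Nat.gcd_sub_one_add_one (q : ℕ) : (q - 1).gcd (q + 1) = if Even q then 1 else 2 := by
  rcases q with _ | q
  · rfl
  rw [Nat.add_sub_cancel, add_assoc, add_comm, Nat.gcd_add_self_right]
  split_ifs with h
  · exact Nat.coprime_two_right.mpr (by simpa [Nat.even_add_one] using h)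
  · exact Nat.gcd_eq_right (even_iff_two_dvd.mp (by simpa [Nat.even_add_one] using h))

theorem pow_eq_self_iff_pow_sub_one_eq_one {G : Type*} [Group G] {n : ℕ} (hn : n ≠ 0) (a : G) :
    a ^ n = a ↔ a ^ (n - 1) = 1 := by
  rw [← pow_sub_one_mul hn, mul_eq_right]

theorem MonoidHom.natCard_fiber {A B : Type*} [Group A] [Group B] (f : A →* B) (b : B) :
    Nat.card {a // f a = b} = if b ∈ f.range then Nat.card f.ker else 0 := by
  split_ifs with hb
  · obtain ⟨a, rfl⟩ := hb
    exact Nat.card_congr (f.fiberEquivKer a)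
  · have : IsEmpty {a // f a = b} := ⟨fun a => hb ⟨a, a.2⟩⟩
    exact Nat.card_of_isEmpty

namespace IsCyclic

variable {C : Type*} [CommGroup C] [IsCyclic C] [Finite C]

theorem range_powMonoidHom_eq_ker (d : ℕ) :
    (powMonoidHom d : C →* C).range =
      (powMonoidHom (Nat.card C / (Nat.card C).gcd d)).ker := by
  have hd : (Nat.card C).gcd d ∣ Nat.card C := Nat.gcd_dvd_left _ d
  refine Subgroup.eq_of_le_of_card_ge ?_ ?_
  · rintro _ ⟨y, rfl⟩
    rw [MonoidHom.mem_ker, powMonoidHom_apply, powMonoidHom_apply, ← pow_mul,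
      ← Nat.mul_div_assoc _ hd, mul_comm, Nat.mul_div_assoc _ (Nat.gcd_dvd_right _ d), pow_mul,
      pow_card_eq_one', one_pow]
  · rw [card_powMonoidHom_ker, card_powMonoidHom_range, Nat.gcd_eq_right (Nat.div_dvd_of_dvd hd)]

theorem natCard_pow_eq (d : ℕ) (x : C) :
    Nat.card {y : C // y ^ d = x} =
      if x ^ (Nat.card C / (Nat.card C).gcd d) = 1 then (Nat.card C).gcd d else 0 := by
  have := (powMonoidHom d : C →* C).natCard_fiber x
  rwa [range_powMonoidHom_eq_ker, MonoidHom.mem_ker, card_powMonoidHom_ker] at this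

end IsCyclic

namespace MonoidHom

variable {G K M : Type*} [CommGroup G] [CommGroup K] [CommMonoid M]

theorem index_range_mul_card {ι : K →* G} (hι : Injective ι) :
    ι.range.index * Nat.card K = Nat.card G := by
  rw [← ι.range.index_mul_card, Nat.card_congr (ofInjective hι).toEquiv]

variable [Finite G] [HasEnoughRootsOfUnity M (Monoid.exponent G)]

theorem isCyclic_of_hasEnoughRootsOfUnity [IsCyclic G] : IsCyclic (G →* Mˣ) :=
  (MulEquiv.isCyclic (CommGroup.monoidHom_mulEquiv_of_hasEnoughRootsOfUnity G M).some).mpr ‹_›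

theorem compHom'_surjective {ι : K →* G} (hι : Injective ι) :
    Surjective (compHom' ι : (G →* Mˣ) →* K →* Mˣ) := by
  intro ω
  obtain ⟨ν, hν⟩ := domRestrict_surjective (G := G) M ι.range
    (ω.comp (ofInjective hι).symm.toMonoidHom)
  refine ⟨ν, ext fun x => ?_⟩
  simpa [ofInjective_apply] using DFunLike.congr_fun hν (ofInjective hι x)

theorem card_ker_compHom' (ι : K →* G) :
    Nat.card (compHom' ι : (G →* Mˣ) →* K →* Mˣ).ker = ι.range.index := by
  have : (compHom' ι : (G →* Mˣ) →* K →* Mˣ).ker = (domRestrictHom ι.range Mˣ).ker := by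
    ext ν
    simp [MonoidHom.ext_iff]
  rw [this, CommGroup.card_domRestrictHom_ker]
  rfl

theorem natCard_comp_eq_index {ι : K →* G} (hι : Injective ι) (ω : K →* Mˣ) :
    Nat.card {ν : G →* Mˣ // ν.comp ι = ω} = ι.range.index := by
  have := (compHom' ι : (G →* Mˣ) →* K →* Mˣ).natCard_fiber ω
  rwa [if_pos (show ω ∈ _ from compHom'_surjective hι ω), card_ker_compHom'] at this

theorem ker_compHom'_eq_ker_powMonoidHom [IsCyclic G] (ι : K →* G) :
    (compHom' ι : (G →* Mˣ) →* K →* Mˣ).ker = (powMonoidHom ι.range.index).ker := by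
  have := isCyclic_of_hasEnoughRootsOfUnity (G := G) (M := M)
  refine Subgroup.eq_of_le_of_card_ge (fun ν hν => ?_) ?_
  · have := pow_card_eq_one' (G := (compHom' ι : (G →* Mˣ) →* K →* Mˣ).ker) (x := ⟨ν, hν⟩)
    rw [card_ker_compHom'] at this
    exact congrArg Subtype.val this
  · rw [IsCyclic.card_powMonoidHom_ker, card_ker_compHom',
      CommGroup.card_monoidHom_of_hasEnoughRootsOfUnity,
      Nat.gcd_eq_right (Subgroup.index_dvd_card _)]

theorem natCard_pow_card_eq_one_and_comp_eq [IsCyclic G] {ι : K →* G} (hι : Injective ι)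
    (ω : K →* Mˣ) :
    Nat.card {ν : G →* Mˣ // ν ^ Nat.card K = 1 ∧ ν.comp ι = ω} =
      Nat.card {χ : K →* Mˣ // χ ^ ι.range.index = ω} := by
  have := isCyclic_of_hasEnoughRootsOfUnity (G := G) (M := M)
  set R : (G →* Mˣ) →* K →* Mˣ := compHom' ι
  set k := ι.range.index
  have hrange : (powMonoidHom k : (G →* Mˣ) →* _).range = (powMonoidHom (Nat.card K)).ker := by
    rw [IsCyclic.range_powMonoidHom_eq_ker, CommGroup.card_monoidHom_of_hasEnoughRootsOfUnity,
      ← index_range_mul_card hι, Nat.gcd_mul_right_left,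
      Nat.mul_div_cancel_left _ (Nat.pos_of_ne_zero Subgroup.index_ne_zero_of_finite)]
  let Ψ : (K →* Mˣ) ≃* (powMonoidHom k : (G →* Mˣ) →* _).range :=
    (QuotientGroup.quotientKerEquivOfSurjective R (compHom'_surjective hι)).symm.trans
      ((QuotientGroup.quotientMulEquivOfEq (ker_compHom'_eq_ker_powMonoidHom ι)).trans
        (QuotientGroup.quotientKerEquivRange _))
  have hΨ (ν : G →* Mˣ) : (Ψ (R ν) : G →* Mˣ) = ν ^ k := by
    have h : (QuotientGroup.quotientKerEquivOfSurjective R (compHom'_surjective hι)).symm (R ν) =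
        (ν : (G →* Mˣ) ⧸ R.ker) := by
      rw [MulEquiv.symm_apply_eq]; rfl
    simp only [Ψ, MulEquiv.trans_apply, h]
    rfl
  have hRΨ (χ : K →* Mˣ) : R (Ψ χ) = χ ^ k := by
    obtain ⟨ν, rfl⟩ := compHom'_surjective hι χ
    rw [hΨ, map_pow]
  refine Nat.card_congr (((Equiv.subtypeSubtypeEquivSubtypeInter (· ∈ (powMonoidHom k).range)
    fun ν => ν.comp ι = ω).trans (Equiv.subtypeEquivRight fun ν => ?_)).symm.trans
    (Ψ.toEquiv.subtypeEquiv fun χ => ?_).symm)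
  · rw [hrange, mem_ker, powMonoidHom_apply]
  · rw [← hRΨ]; rfl

end MonoidHom

theorem FiniteField.index_range_units_map_algebraMap (F L : Type*) [Field F] [Fintype F]
    [Field L] [Fintype L] [Algebra F L] (hL : Fintype.card L = Fintype.card F ^ 2) :
    (Units.map ((algebraMap F L : F →+* L) : F →* L)).range.index = Fintype.card F + 1 := by
  have h := MonoidHom.index_range_mul_card (Units.map_injective (algebraMap F L).injective)
  rw [Nat.card_units, Nat.card_units, Nat.card_eq_fintype_card, Nat.card_eq_fintype_card, hL,
    ← one_pow 2, Nat.sq_sub_sq, one_pow] at h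
  exact Nat.eq_of_mul_eq_mul_right (by simpa using Fintype.one_lt_card (α := F)) h

/-- The number of primitive characters `ν` of `F_{q²}^*` (i.e. `ν ≠ ν^q`) whose
restriction to `F_q^*` is a given character `ω` equals `q - 1` if `q` is odd and
`ω^((q-1)/2)` is trivial, `q + 1` if `q` is odd and `ω^((q-1)/2)` is nontrivial,
and `q` if `q` is even. -/
theorem count_primitive_characters_with_restriction
    (F L : Type*) [Field F] [Fintype F] [Field L] [Fintype L] [Algebra F L]
    (hL : Fintype.card L = Fintype.card F ^ 2)
    (ω : Fˣ →* ℂˣ) :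
    Nat.card {ν : Lˣ →* ℂˣ //
        ν ^ Fintype.card F ≠ ν ∧
        ν.comp (Units.map ((algebraMap F L : F →+* L) : F →* L)) = ω} =
      if Even (Fintype.card F) then Fintype.card F
      else if ω ^ ((Fintype.card F - 1) / 2) = 1 then Fintype.card F - 1
      else Fintype.card F + 1 := by
  set q := Fintype.card F
  set ι : Fˣ →* Lˣ := Units.map ((algebraMap F L : F →+* L) : F →* L)
  have hι : Injective ι := Units.map_injective (algebraMap F L).injective
  have : NeZero (Monoid.exponent Lˣ) := ⟨Monoid.exponent_ne_zero_of_finite⟩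
  have : NeZero (Monoid.exponent Fˣ) := ⟨Monoid.exponent_ne_zero_of_finite⟩
  have : IsCyclic (Fˣ →* ℂˣ) := MonoidHom.isCyclic_of_hasEnoughRootsOfUnity
  have hK : Nat.card Fˣ = q - 1 := by rw [Nat.card_units, Nat.card_eq_fintype_card]
  have hY : Nat.card (Fˣ →* ℂˣ) = q - 1 := by
    rw [CommGroup.card_monoidHom_of_hasEnoughRootsOfUnity, hK]
  have hprim (ν : Lˣ →* ℂˣ) : ν ^ q = ν ↔ ν ^ Nat.card Fˣ = 1 :=
    hK ▸ pow_eq_self_iff_pow_sub_one_eq_one Fintype.card_ne_zero ν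
  have hsplit := Nat.card_subtype_and_add_card_subtype_not_and (fun ν : Lˣ →* ℂˣ => ν ^ q = ν)
    (fun ν => ν.comp ι = ω)
  simp only [hprim] at hsplit
  rw [MonoidHom.natCard_pow_card_eq_one_and_comp_eq hι, MonoidHom.natCard_comp_eq_index hι,
    IsCyclic.natCard_pow_eq, hY, FiniteField.index_range_units_map_algebraMap F L hL,
    Nat.gcd_sub_one_add_one] at hsplit
  have hω : ω ^ (q - 1) = 1 := by rw [← hY]; exact pow_card_eq_one' (x := ω)
  simp only [ne_eq, hprim]
  by_cases hq2 : Even q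
  · simp only [hq2, if_true, Nat.div_one, hω] at hsplit ⊢
    omega
  · simp only [hq2, if_false] at hsplit ⊢
    split_ifs at hsplit ⊢ <;> omega
end

section
/- Let F be a p-adic field with integer ring O, maximal ideal p = ϖO, residue field size q, and K' = [[1+p, O],[p, 1+p]] ∩ GL_2(O). For n ≥ 0, the double coset K'·diag(ϖ^n, 1)·K' equals the disjoint union over b ∈ O/p^n of the left cosets [[ϖ^n, b],[0, 1]]·K'. -/
open Matrix

/-- The pro-`p` unipotent radical `K' = [[1+p, O],[p, 1+p]]` of the Iwahori subgroup
of `GL₂(ℚ_p)`, realized as a set of matrices. -/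
def Kprime (p : ℕ) [Fact p.Prime] : Set (Matrix (Fin 2) (Fin 2) ℚ_[p]) :=
  {g | ‖g 0 0 - 1‖ < 1 ∧ ‖g 0 1‖ ≤ 1 ∧ ‖g 1 0‖ < 1 ∧ ‖g 1 1 - 1‖ < 1}

/-!
Write `u t = !![1, t; 0, 1]` and `δ = !![ϖ^n, 0; 0, 1]`. Then `!![ϖ^n, b; 0, 1] = u b * δ` with
`u b ∈ K'` for `b ∈ O`; conversely, for `!![a, b; c, d] ∈ K'` the entry `d` is a unit and
`!![a, b; c, d] * δ = !![ϖ^n, b / d; 0, 1] * !![a - c * (b / d), 0; c * ϖ^n, d]`, whose last factor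
lies in `K'` again. Two cosets differ by `u ((b₁ - b₂) / ϖ^n)`, which lies in `K'` iff
`‖b₁ - b₂‖ ≤ ‖ϖ^n‖`; comparing the `(0, 1)` and `(1, 1)` entries shows nothing else can relate them.
-/

section NormLemmas

variable {R : Type*} [SeminormedRing R]

theorem norm_mul_lt_one_of_lt_of_le {a b : R} (ha : ‖a‖ < 1) (hb : ‖b‖ ≤ 1) : ‖a * b‖ < 1 :=
  (norm_mul_le a b).trans_lt (mul_lt_one_of_nonneg_of_lt_one_left (norm_nonneg a) ha hb)

theorem norm_mul_lt_one_of_le_of_lt {a b : R} (ha : ‖a‖ ≤ 1) (hb : ‖b‖ < 1) : ‖a * b‖ < 1 :=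
  (norm_mul_le a b).trans_lt (mul_lt_one_of_nonneg_of_lt_one_right ha (norm_nonneg b) hb)

theorem norm_mul_le_one {a b : R} (ha : ‖a‖ ≤ 1) (hb : ‖b‖ ≤ 1) : ‖a * b‖ ≤ 1 := by
  simpa using norm_mul_le_of_le ha hb

variable [IsUltrametricDist R]

theorem norm_add_lt_one {a b : R} (ha : ‖a‖ < 1) (hb : ‖b‖ < 1) : ‖a + b‖ < 1 :=
  (IsUltrametricDist.norm_add_le_max a b).trans_lt (max_lt ha hb)

theorem norm_add_le_one {a b : R} (ha : ‖a‖ ≤ 1) (hb : ‖b‖ ≤ 1) : ‖a + b‖ ≤ 1 :=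
  (IsUltrametricDist.norm_add_le_max a b).trans (max_le ha hb)

theorem norm_eq_one_of_norm_sub_one_lt_one [NormOneClass R] {a : R} (h : ‖a - 1‖ < 1) :
    ‖a‖ = 1 := by
  have hne : ‖a - 1‖ ≠ ‖(1 : R)‖ := by rw [norm_one]; exact h.ne
  simpa [max_eq_right h.le] using IsUltrametricDist.norm_add_eq_max_of_norm_ne_norm hne

end NormLemmas

namespace Matrix

theorem upper_eq_unipotent_mul_diag {R : Type*} [Semiring R] (π b : R) :
    !![π, b; 0, 1] = !![1, b; 0, 1] * !![π, 0; 0, 1] := by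
  simp

theorem upper_eq_upper_mul_unipotent {R : Type*} [Ring R] {π b₁ b₂ t : R} (h : π * t = b₁ - b₂) :
    !![π, b₁; 0, 1] = !![π, b₂; 0, 1] * !![1, t; 0, 1] := by
  simp [h]

theorem mul_diag_eq_upper_mul_lower {K : Type*} [Field K] {a b c d : K} (π : K) (hd : d ≠ 0) :
    !![a, b; c, d] * !![π, 0; 0, 1] = !![π, b / d; 0, 1] * !![a - c * (b / d), 0; c * π, d] := by
  rw [mul_fin_two, mul_fin_two, div_mul_cancel₀ b hd]
  simp only [mul_zero, mul_one, add_zero, zero_add, zero_mul, one_mul]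
  ring_nf

end Matrix

namespace Kprime

variable {p : ℕ} [Fact p.Prime]

theorem norm_apply_le_one {g : Matrix (Fin 2) (Fin 2) ℚ_[p]} (hg : g ∈ Kprime p) (i j : Fin 2) :
    ‖g i j‖ ≤ 1 := by
  obtain ⟨h00, h01, h10, h11⟩ := hg
  fin_cases i <;> fin_cases j
  exacts [(norm_eq_one_of_norm_sub_one_lt_one h00).le, h01, h10.le,
    (norm_eq_one_of_norm_sub_one_lt_one h11).le]

theorem fin_two_mem_iff {a b c d : ℚ_[p]} :
    !![a, b; c, d] ∈ Kprime p ↔ ‖a - 1‖ < 1 ∧ ‖b‖ ≤ 1 ∧ ‖c‖ < 1 ∧ ‖d - 1‖ < 1 :=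
  Iff.rfl

theorem one_mem : (1 : Matrix (Fin 2) (Fin 2) ℚ_[p]) ∈ Kprime p := by
  simp [Kprime]

theorem mul_mem {g h : Matrix (Fin 2) (Fin 2) ℚ_[p]} (hg : g ∈ Kprime p) (hh : h ∈ Kprime p) :
    g * h ∈ Kprime p := by
  have hg' := norm_apply_le_one hg
  have hh' := norm_apply_le_one hh
  obtain ⟨hg00, hg01, hg10, hg11⟩ := hg
  obtain ⟨hh00, hh01, hh10, hh11⟩ := hh
  simp only [Kprime, Set.mem_ofPred_eq, mul_apply, Fin.sum_univ_two]
  refine ⟨?_, ?_, ?_, ?_⟩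
  · rw [show g 0 0 * h 0 0 + g 0 1 * h 1 0 - 1
        = (g 0 0 - 1) * h 0 0 + ((h 0 0 - 1) + g 0 1 * h 1 0) by ring]
    exact norm_add_lt_one (norm_mul_lt_one_of_lt_of_le hg00 (hh' 0 0))
      (norm_add_lt_one hh00 (norm_mul_lt_one_of_le_of_lt hg01 hh10))
  · exact norm_add_le_one (norm_mul_le_one (hg' 0 0) hh01) (norm_mul_le_one hg01 (hh' 1 1))
  · exact norm_add_lt_one (norm_mul_lt_one_of_lt_of_le hg10 (hh' 0 0))
      (norm_mul_lt_one_of_le_of_lt (hg' 1 1) hh10)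
  · rw [show g 1 0 * h 0 1 + g 1 1 * h 1 1 - 1
        = g 1 0 * h 0 1 + ((g 1 1 - 1) * h 1 1 + (h 1 1 - 1)) by ring]
    exact norm_add_lt_one (norm_mul_lt_one_of_lt_of_le hg10 hh01)
      (norm_add_lt_one (norm_mul_lt_one_of_lt_of_le hg11 (hh' 1 1)) hh11)

theorem unipotent_mem_iff {t : ℚ_[p]} : !![1, t; 0, 1] ∈ Kprime p ↔ ‖t‖ ≤ 1 := by
  simp [fin_two_mem_iff]

theorem exists_mul_diag_eq_upper_mul {k : Matrix (Fin 2) (Fin 2) ℚ_[p]} (hk : k ∈ Kprime p)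
    {π : ℚ_[p]} (hπ : ‖π‖ ≤ 1) :
    ∃ b : ℤ_[p], ∃ k' ∈ Kprime p, k * !![π, 0; 0, 1] = !![π, (b : ℚ_[p]); 0, 1] * k' := by
  obtain ⟨a, b, c, d, rfl⟩ : ∃ a b c d, k = !![a, b; c, d] := ⟨_, _, _, _, eta_fin_two k⟩
  obtain ⟨ha, hb, hc, hd⟩ := fin_two_mem_iff.mp hk
  have hd' : ‖d‖ = 1 := norm_eq_one_of_norm_sub_one_lt_one hd
  have hd₀ : d ≠ 0 := norm_ne_zero_iff.mp (by simp [hd'])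
  have hbd : ‖b / d‖ ≤ 1 := by rwa [norm_div, hd', div_one]
  refine ⟨⟨b / d, hbd⟩, !![a - c * (b / d), 0; c * π, d], fin_two_mem_iff.mpr ⟨?_, by simp,
    norm_mul_lt_one_of_lt_of_le hc hπ, hd⟩, mul_diag_eq_upper_mul_lower π hd₀⟩
  rw [show a - c * (b / d) - 1 = (a - 1) + -(c * (b / d)) by ring]
  exact norm_add_lt_one ha (by rw [norm_neg]; exact norm_mul_lt_one_of_lt_of_le hc hbd)

theorem setOf_mul_subset {g u : Matrix (Fin 2) (Fin 2) ℚ_[p]} (hu : u ∈ Kprime p) :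
    {x | ∃ k ∈ Kprime p, x = g * u * k} ⊆ {x | ∃ k ∈ Kprime p, x = g * k} := by
  rintro x ⟨k, hk, rfl⟩
  exact ⟨u * k, mul_mem hu hk, mul_assoc g u k⟩

theorem setOf_upper_mul_subset {π b₁ b₂ : ℚ_[p]} (hπ : π ≠ 0) (h : ‖b₁ - b₂‖ ≤ ‖π‖) :
    {x | ∃ k ∈ Kprime p, x = !![π, b₁; 0, 1] * k} ⊆
      {x | ∃ k ∈ Kprime p, x = !![π, b₂; 0, 1] * k} := by
  rw [upper_eq_upper_mul_unipotent (mul_div_cancel₀ (b₁ - b₂) hπ)]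
  refine setOf_mul_subset (unipotent_mem_iff.mpr ?_)
  rwa [norm_div, div_le_one (norm_pos_iff.mpr hπ)]

theorem norm_sub_le_of_upper_eq_mul {π b₁ b₂ : ℚ_[p]} {k : Matrix (Fin 2) (Fin 2) ℚ_[p]}
    (hk : k ∈ Kprime p) (h : !![π, b₁; 0, 1] = !![π, b₂; 0, 1] * k) : ‖b₁ - b₂‖ ≤ ‖π‖ := by
  rw [eta_fin_two k, mul_fin_two] at h
  have h01 := congrFun (congrFun h 0) 1
  have h11 := congrFun (congrFun h 1) 1
  simp only [of_apply, cons_val', cons_val_one, cons_val_fin_one, cons_val_zero, zero_mul,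
    one_mul, zero_add] at h01 h11
  have hdiff : b₁ - b₂ = π * k 0 1 := by rw [h01, ← h11]; ring
  rw [hdiff, norm_mul]
  exact mul_le_of_le_one_right (norm_nonneg π) hk.2.1

theorem setOf_upper_mul_eq_iff {π b₁ b₂ : ℚ_[p]} (hπ : π ≠ 0) :
    {x | ∃ k ∈ Kprime p, x = !![π, b₁; 0, 1] * k} =
        {x | ∃ k ∈ Kprime p, x = !![π, b₂; 0, 1] * k} ↔ ‖b₁ - b₂‖ ≤ ‖π‖ := by
  refine ⟨fun h => ?_, fun h =>
    (setOf_upper_mul_subset hπ h).antisymm (setOf_upper_mul_subset hπ ?_)⟩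
  · obtain ⟨k, hk, hx⟩ : !![π, b₁; 0, 1] ∈ {x | ∃ k ∈ Kprime p, x = !![π, b₂; 0, 1] * k} :=
      h ▸ ⟨1, one_mem, (mul_one _).symm⟩
    exact norm_sub_le_of_upper_eq_mul hk hx
  · rwa [norm_sub_rev]

end Kprime

/-- For `n ≥ 0`, the double coset `K'·diag(p^n, 1)·K'` is the disjoint union over
`b ∈ O/p^n` of the left cosets `[[p^n, b],[0,1]]·K'`: the double coset equals the
union over `b ∈ ℤ_p`, and two such cosets agree iff `b₁ ≡ b₂ (mod p^n)`. -/
theorem double_coset_decomposition (p : ℕ) [Fact p.Prime] (n : ℕ) :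
    (∀ x : Matrix (Fin 2) (Fin 2) ℚ_[p],
      (∃ k₁ ∈ Kprime p, ∃ k₂ ∈ Kprime p,
          x = k₁ * !![(p : ℚ_[p]) ^ n, 0; 0, 1] * k₂) ↔
        ∃ b : ℤ_[p], ∃ k ∈ Kprime p,
          x = !![(p : ℚ_[p]) ^ n, (b : ℚ_[p]); 0, 1] * k) ∧
    ∀ b₁ b₂ : ℤ_[p],
      ({x | ∃ k ∈ Kprime p, x = !![(p : ℚ_[p]) ^ n, (b₁ : ℚ_[p]); 0, 1] * k} =
        {x | ∃ k ∈ Kprime p, x = !![(p : ℚ_[p]) ^ n, (b₂ : ℚ_[p]); 0, 1] * k}) ↔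
        ‖b₁ - b₂‖ ≤ (p : ℝ) ^ (-(n : ℤ)) := by
  have hpn : ‖(p : ℚ_[p]) ^ n‖ ≤ 1 := by
    rw [norm_pow]; exact pow_le_one₀ (norm_nonneg _) Padic.norm_p_lt_one.le
  have hpn₀ : (p : ℚ_[p]) ^ n ≠ 0 :=
    pow_ne_zero n (Nat.cast_ne_zero.mpr (Fact.out : p.Prime).ne_zero)
  refine ⟨fun x => ⟨?_, ?_⟩, fun b₁ b₂ => ?_⟩
  · rintro ⟨k₁, hk₁, k₂, hk₂, rfl⟩
    obtain ⟨b, k', hk', h⟩ := Kprime.exists_mul_diag_eq_upper_mul hk₁ hpn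
    exact ⟨b, k' * k₂, Kprime.mul_mem hk' hk₂, by rw [h, mul_assoc]⟩
  · rintro ⟨b, k, hk, rfl⟩
    exact ⟨_, Kprime.unipotent_mem_iff.mpr b.norm_le_one, k, hk,
      by rw [upper_eq_unipotent_mul_diag]⟩
  · rw [Kprime.setOf_upper_mul_eq_iff hpn₀, PadicInt.norm_def, PadicInt.coe_sub, Padic.norm_p_pow]
end
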